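/- (First-order entropy change under natural policy gradient) Let π be a softmax policy with logits z over finite A, and update the logits by δ(a) = η · Adv(a). Then the first-order change in entropy equals −η · Cov_{a∼π}(log π(a), Adv(a)). -/

import Mathlib

open Finset

noncomputable def softmax {A : Type*} [Fintype A] (z : A → ℝ) (a : A) : ℝ :=
  Real.exp (z a) / ∑ a', Real.exp (z a')

noncomputable def entropy {A : Type*} [Fintype A] (p : A → ℝ) : ℝ :=
  -∑ a, p a * Real.log (p a)

noncomputable def cov {A : Type*} [Fintype A] (p f g : A → ℝ) : ℝ :=
  (∑ a, p a * (f a * g a)) - (∑ a, p a * f a) * (∑ a, p a * g a)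

/-! Along the line `z + t • δ` the softmax moves by `π a * (δ a - E_π δ)`, and
`d H = -∑ a, dπ a * (log π a + 1)`. Centring `δ` turns this sum into `-Cov_π (log π, δ)`
(the `+ 1` drops out because the centred terms sum to zero), and `Cov` is linear in `δ = η • Adv`. -/

section

variable {A : Type*} [Fintype A]

theorem sum_exp_pos [Nonempty A] (z : A → ℝ) : 0 < ∑ a, Real.exp (z a) :=
  sum_pos (fun _ _ => Real.exp_pos _) univ_nonempty

theorem softmax_pos [Nonempty A] (z : A → ℝ) (a : A) : 0 < softmax z a :=
  div_pos (Real.exp_pos _) (sum_exp_pos z)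

theorem sum_softmax [Nonempty A] (z : A → ℝ) : ∑ a, softmax z a = 1 := by
  simp only [softmax, ← sum_div]
  exact div_self (sum_exp_pos z).ne'

theorem sum_softmax_mul (z v : A → ℝ) :
    ∑ a, softmax z a * v a = (∑ a, Real.exp (z a) * v a) / ∑ a, Real.exp (z a) := by
  simp only [softmax, div_mul_eq_mul_div, sum_div]

theorem hasDerivAt_softmax_line [Nonempty A] (z v : A → ℝ) (a : A) (t : ℝ) :
    HasDerivAt (fun s : ℝ => softmax (fun b => z b + s * v b) a)
      (softmax (fun b => z b + t * v b) a *
        (v a - ∑ b, softmax (fun b => z b + t * v b) b * v b)) t := by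
  have hexp : ∀ b, HasDerivAt (fun s : ℝ => Real.exp (z b + s * v b))
      (Real.exp (z b + t * v b) * v b) t := fun b => by
    simpa using (((hasDerivAt_id t).mul_const (v b)).const_add (z b)).exp
  have hS := sum_exp_pos fun b => z b + t * v b
  refine ((hexp a).fun_div (HasDerivAt.fun_sum fun b _ => hexp b) hS.ne').congr_deriv ?_
  rw [sum_softmax_mul, softmax]
  field_simp

theorem hasDerivAt_entropy {p : ℝ → A → ℝ} {p' : A → ℝ} {t : ℝ}
    (hp : ∀ a, HasDerivAt (fun s => p s a) (p' a) t) (hp0 : ∀ a, p t a ≠ 0) :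
    HasDerivAt (fun s => entropy (p s)) (-∑ a, p' a * (Real.log (p t a) + 1)) t := by
  refine (HasDerivAt.fun_sum fun a _ => (hp a).fun_mul ((hp a).log (hp0 a))).neg.congr_deriv ?_
  congr 1
  refine sum_congr rfl fun a _ => ?_
  field_simp [hp0 a]

theorem cov_eq_sum_mul_sub_mean_mul_add {p : A → ℝ} (hp : ∑ a, p a = 1) (f g : A → ℝ) (c : ℝ) :
    cov p f g = ∑ a, p a * (g a - ∑ b, p b * g b) * (f a + c) := by
  set m := ∑ b, p b * g b
  have hexpand : ∀ a, p a * (g a - m) * (f a + c)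
      = p a * (f a * g a) + c * (p a * g a) - m * (p a * f a) - m * c * p a := fun a => by ring
  simp only [hexpand, sum_sub_distrib, sum_add_distrib, ← mul_sum, hp, cov]
  ring

theorem cov_const_mul_right (p f g : A → ℝ) (c : ℝ) :
    cov p f (fun a => c * g a) = c * cov p f g := by
  simp only [cov, mul_left_comm _ c, ← mul_sum]
  ring

end

/-- First-order entropy change under the natural-policy-gradient logit update
`δ a = η * Adv a` equals `−η · Cov_{a∼π}(log π a, Adv a)`. -/
theorem stmt5 {A : Type*} [Fintype A] [Nonempty A]
    (z : A → ℝ) (π Adv : A → ℝ) (hπ : π = softmax z) (η : ℝ) :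
    HasDerivAt
      (fun t : ℝ => entropy (softmax (fun a => z a + t * (η * Adv a))))
      (-(η * cov π (fun a => Real.log (π a)) Adv)) 0 := by
  subst hπ
  have hH := hasDerivAt_entropy (fun a => hasDerivAt_softmax_line z (fun b => η * Adv b) a 0)
    (fun a => (softmax_pos _ a).ne')
  simp only [zero_mul, add_zero] at hH
  rwa [← cov_const_mul_right, cov_eq_sum_mul_sub_mean_mul_add (sum_softmax z) _ _ 1]
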